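/- Let p > 3/2, let f ∈ E_p be nonzero, let q > 3 and φ ∈ Φ_q. For s ∈ (0, ‖f‖_{L^∞}), define the pseudo-inverse (f* ∘ a_φ)^{-1}(s) = sup{ e ∈ (inf φ, 0) : f*(a_φ(e)) > s }. Then (f* ∘ a_φ)^{-1} is nonincreasing from (0, ‖f‖_{L^∞}) to (inf φ, 0), and for all (x,v) ∈ ℝ³×ℝ³ and s ∈ (0, ‖f‖_{L^∞}): (i) if f^{*φ}(x,v) > s then √(1+|v|²) − 1 + φ(x) ≤ (f* ∘ a_φ)^{-1}(s); (ii) if f^{*φ}(x,v) ≤ s then √(1+|v|²) − 1 + φ(x) ≥ (f* ∘ a_φ)^{-1}(s). -/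

import Mathlib

noncomputable section

open MeasureTheory Real Set Filter Topology
open scoped ENNReal NNReal

/-- Physical space ℝ³. -/
abbrev Sp : Type := EuclideanSpace ℝ (Fin 3)

/-- Phase space ℝ³ × ℝ³. -/
abbrev Ph : Type := Sp × Sp

/-- The relativistic velocity weight √(1+|v|²). -/
def vW (v : Sp) : ℝ := Real.sqrt (1 + ‖v‖ ^ 2)

/-- The L¹ norm on phase space. -/
def L1n (f : Ph → ℝ) : ℝ := ∫ z : Ph, |f z|

/-- The L^p norm on phase space. -/
def Lpn (p : ℝ) (f : Ph → ℝ) : ℝ := (eLpNorm f (ENNReal.ofReal p) volume).toReal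

/-- The weighted norm ‖√(1+|v|²) f‖_{L¹}. -/
def kinN (f : Ph → ℝ) : ℝ := ∫ z : Ph, vW z.2 * |f z|

/-- Membership in the energy space E_p. -/
structure IsEp (p : ℝ) (f : Ph → ℝ) : Prop where
  nonneg : ∀ z, 0 ≤ f z
  meas : Measurable f
  l1 : Integrable f volume
  lp : MemLp f (ENNReal.ofReal p) volume
  kin : Integrable (fun z : Ph => vW z.2 * f z) volume

/-- The norm of the energy space E_p. -/
def EpNorm (p : ℝ) (f : Ph → ℝ) : ℝ := L1n f + Lpn p f + kinN f

/-- The spatial density ρ_f. -/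
def dens (f : Ph → ℝ) (x : Sp) : ℝ := ∫ v : Sp, f (x, v)

/-- The gravitational potential φ_f = -(1/4π) ∫ ρ_f(y)/|x-y| dy. -/
def pot (f : Ph → ℝ) (x : Sp) : ℝ := -(1 / (4 * π)) * ∫ y : Sp, dens f y / ‖x - y‖

/-- The L² norm of the gradient ‖∇φ‖_{L²}. -/
def gradL2 (φ : Sp → ℝ) : ℝ := (eLpNorm (gradient φ) 2 volume).toReal

/-- The L² norm of the difference of two gradients ‖∇φ - ∇ψ‖_{L²}. -/
def gradL2diff (φ ψ : Sp → ℝ) : ℝ :=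
  (eLpNorm (fun x => gradient φ x - gradient ψ x) 2 volume).toReal

/-- The Hamiltonian H(f). -/
def Ham (f : Ph → ℝ) : ℝ :=
  (∫ z : Ph, (vW z.2 - 1) * f z) - (1 / 2) * ∫ x : Sp, ‖gradient (pot f) x‖ ^ 2

/-- The distribution function μ_f(s) = meas{f > s}. -/
def distFun (f : Ph → ℝ) (s : ℝ) : ℝ≥0∞ := volume {z : Ph | s < f z}

/-- The Schwarz rearrangement f*(t) = inf{s ≥ 0 : μ_f(s) ≤ t}. -/
def schwarz (f : Ph → ℝ) (t : ℝ) : ℝ :=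
  sInf {s : ℝ | 0 ≤ s ∧ distFun f s ≤ ENNReal.ofReal t}

/-- m(φ) = inf_x (1+|x|)|φ(x)|. -/
def mPhi (φ : Sp → ℝ) : ℝ := ⨅ x : Sp, (1 + ‖x‖) * |φ x|

/-- Membership in the potential space Φ_q. -/
structure IsPhiq (q : ℝ) (φ : Sp → ℝ) : Prop where
  nonpos : ∀ x, φ x ≤ 0
  lq : MemLp φ (ENNReal.ofReal q) volume
  grad : MemLp (gradient φ) 2 volume
  zeroAtInfty : Tendsto φ (cocompact Sp) (𝓝 0)
  m_pos : 0 < mPhi φ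

/-- The L^q norm on ℝ³. -/
def Lqn (q : ℝ) (φ : Sp → ℝ) : ℝ := (eLpNorm φ (ENNReal.ofReal q) volume).toReal

/-- The microscopic energy e(x,v) = √(1+|v|²) - 1 + φ(x). -/
def microE (φ : Sp → ℝ) (z : Ph) : ℝ := vW z.2 - 1 + φ z.1

/-- The Jacobian a_φ(e), as an extended nonnegative real. -/
def aJacE (φ : Sp → ℝ) (e : ℝ) : ℝ≥0∞ := volume {z : Ph | microE φ z < e}

/-- The Jacobian a_φ(e) (real-valued). -/
def aJac (φ : Sp → ℝ) (e : ℝ) : ℝ := (aJacE φ e).toReal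

/-- The inverse a_φ^{-1}(s) of the Jacobian. -/
def aJacInv (φ : Sp → ℝ) (s : ℝ) : ℝ := sSup {e : ℝ | e < 0 ∧ aJac φ e < s}

/-- The essential infimum of φ, valued in EReal. -/
def essInfE (φ : Sp → ℝ) : EReal := essInf (fun x => (φ x : EReal)) volume

/-- The rearrangement f^{*φ} of f with respect to the microscopic energy of φ. -/
def rearr (f : Ph → ℝ) (φ : Sp → ℝ) (z : Ph) : ℝ :=
  if microE φ z < 0 then schwarz f (aJac φ (microE φ z)) else 0

/-- The reduced functional J(φ). -/
def Jfun (Q : Ph → ℝ) (φ : Sp → ℝ) : ℝ :=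
  (∫ z : Ph, microE φ z * rearr Q φ z) + (1 / 2) * ∫ x : Sp, ‖gradient φ x‖ ^ 2

/-- The kernel K(η) = (((1+η)₊² - 1)₊)^{1/2} (1+η). -/
def Kfun (η : ℝ) : ℝ := Real.sqrt (max ((max (1 + η) 0) ^ 2 - 1) 0) * (1 + η)

/-- Radial symmetry of a function on ℝ³. -/
def IsRadial (φ : Sp → ℝ) : Prop := ∀ x y : Sp, ‖x‖ = ‖y‖ → φ x = φ y

/-- The standing assumptions on the steady state Q. -/
structure IsSteadyState (Q : Ph → ℝ) (F : ℝ → ℝ) (eQ : ℝ) : Prop where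
  cont : Continuous Q
  nonneg : ∀ z, 0 ≤ Q z
  nonzero : Q ≠ 0
  cpt : HasCompactSupport Q
  radial : ∀ x v x' v' : Sp, ‖x‖ = ‖x'‖ → ‖v‖ = ‖v'‖ → Q (x, v) = Q (x', v')
  Fcont : Continuous F
  Fnonneg : ∀ e, 0 ≤ F e
  eQ_neg : eQ < 0
  Fzero : ∀ e, eQ ≤ e → F e = 0
  Fsmooth : ContDiffOn ℝ 1 F (Iio eQ)
  Fanti : StrictAntiOn F (Iio eQ)
  eqF : ∀ z : Ph, Q z = F (microE (pot Q) z)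

/-- The microscopic energy of the steady state: e_Q(x,v). -/
def eQfun (Q : Ph → ℝ) (z : Ph) : ℝ := microE (pot Q) z

/-- The projection Πh onto functions of the microscopic energy e_Q. -/
def PiProj (Q : Ph → ℝ) (h : Sp → ℝ) (z : Ph) : ℝ :=
  (∫ y : Sp, Kfun (eQfun Q z - pot Q y) * h y) / (∫ y : Sp, Kfun (eQfun Q z - pot Q y))

/-- The second derivative D²J(φ_Q)(h,h). -/
def D2J (Q : Ph → ℝ) (F : ℝ → ℝ) (h : Sp → ℝ) : ℝ :=
  (∫ x : Sp, ‖gradient h x‖ ^ 2) -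
    ∫ z : Ph, |deriv F (eQfun Q z)| * (h z.1 - PiProj Q h z) ^ 2

/-- The pseudo-inverse of f* ∘ a_φ. -/
def pseudoInv (f : Ph → ℝ) (φ : Sp → ℝ) (s : ℝ) : ℝ :=
  sSup {e : ℝ | essInfE φ < (e : EReal) ∧ e < 0 ∧ s < schwarz f (aJac φ e)}

/-- The L^∞ norm of f. -/
def Linf (f : Ph → ℝ) : ℝ := (eLpNorm f ⊤ volume).toReal

/-! Since `f*` and `a_φ` are monotone, the set `{e ∈ (inf φ, 0) : s < f*(a_φ(e))}` whose supremum
is the pseudo-inverse is an initial segment of `(inf φ, 0)` that shrinks as `s` grows; this gives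
monotonicity and (i)–(ii). It is nonempty because `a_φ(e) → 0` as `e ↓ inf φ` while `f*(t) > s`
for `t < μ_f(s)`, and `μ_f(s) > 0` for `s < ‖f‖_∞`. Its supremum stays below `0` because
`μ_f(s) < ∞` for `f ∈ L¹`, whereas the decay `φ(x) ≤ -m(φ)/(1+|x|)` makes `a_φ(e₀)` arbitrarily
large for suitable `e₀ < 0`. Throughout, `a_φ(e) < ∞` for `e < 0` because `φ ∈ L^q`, `q ≥ 3`. -/

lemma one_le_vW (v : Sp) : 1 ≤ vW v :=
  (Real.le_sqrt zero_le_one (by positivity)).mpr (by simp)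

lemma one_lt_vW {v : Sp} (hv : v ≠ 0) : 1 < vW v :=
  (Real.lt_sqrt zero_le_one).mpr (by have := norm_pos_iff.mpr hv; simp; positivity)

lemma norm_le_vW (v : Sp) : ‖v‖ ≤ vW v :=
  (Real.le_sqrt (norm_nonneg v) (by positivity)).mpr (by linarith)

lemma vW_le_one_add_sq_div_two (v : Sp) : vW v ≤ 1 + ‖v‖ ^ 2 / 2 :=
  Real.sqrt_le_iff.mpr ⟨by positivity, by nlinarith [sq_nonneg (‖v‖ ^ 2)]⟩

lemma measurable_microE {φ : Sp → ℝ} (hφ : Measurable φ) : Measurable (microE φ) := by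
  unfold microE vW
  fun_prop

lemma aemeasurable_microE {φ : Sp → ℝ} (hφ : AEMeasurable φ volume) :
    AEMeasurable (microE φ) volume := by
  rw [Measure.volume_eq_prod]
  exact (Measurable.aemeasurable (by unfold vW; fun_prop)).add
    hφ.aestronglyMeasurable.comp_fst.aemeasurable

section Schwarz

variable {f : Ph → ℝ} {s t : ℝ}

lemma distFun_anti (f : Ph → ℝ) : Antitone (distFun f) :=
  fun _ _ h => measure_mono fun _ hz => lt_of_le_of_lt h hz

lemma eLpNorm_top_ne_top_of_Linf_pos (h : 0 < Linf f) : eLpNorm f ⊤ volume ≠ ⊤ :=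
  (ENNReal.toReal_pos_iff.mp h).2.ne

lemma distFun_Linf (hfin : eLpNorm f ⊤ volume ≠ ⊤) : distFun f (Linf f) = 0 := by
  refine measure_mono_null (fun z hz => ?_) (ae_iff.mp (ae_le_eLpNormEssSup (f := f)))
  intro h
  have : ‖f z‖ ≤ Linf f := by
    rw [Linf, eLpNorm_exponent_top, ← toReal_enorm]
    exact ENNReal.toReal_mono (by rwa [← eLpNorm_exponent_top]) h
  exact hz.not_ge ((le_abs_self _).trans this)

lemma distFun_pos (hnn : ∀ z, 0 ≤ f z) (hs : 0 ≤ s) (hsL : s < Linf f) : 0 < distFun f s := by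
  refine pos_iff_ne_zero.mpr fun h0 => hsL.not_ge ?_
  have hbound : ∀ᵐ z ∂volume, ‖f z‖ ≤ s := by
    filter_upwards [measure_eq_zero_iff_ae_notMem.mp h0] with z hz
    rw [Real.norm_of_nonneg (hnn z)]
    exact not_lt.mp hz
  calc Linf f ≤ (ENNReal.ofReal s).toReal := by
        rw [Linf, eLpNorm_exponent_top]
        exact ENNReal.toReal_mono ENNReal.ofReal_ne_top (eLpNormEssSup_le_of_ae_bound hbound)
  _ = s := ENNReal.toReal_ofReal hs

lemma schwarz_le (hs : 0 ≤ s) (h : distFun f s ≤ ENNReal.ofReal t) : schwarz f t ≤ s :=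
  csInf_le ⟨0, fun _ hb => hb.1⟩ ⟨hs, h⟩

lemma le_schwarz (hfin : eLpNorm f ⊤ volume ≠ ⊤) (h : ENNReal.ofReal t < distFun f s) :
    s ≤ schwarz f t := by
  refine le_csInf ⟨Linf f, ENNReal.toReal_nonneg, by simp [distFun_Linf hfin]⟩ ?_
  rintro b ⟨-, hb⟩
  by_contra! hbs
  exact (h.trans_le (distFun_anti f hbs.le)).not_ge hb

lemma schwarz_anti (hfin : eLpNorm f ⊤ volume ≠ ⊤) : Antitone (schwarz f) := fun t t' htt' =>
  csInf_le_csInf ⟨0, fun _ hb => hb.1⟩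
    ⟨Linf f, ENNReal.toReal_nonneg, by simp [distFun_Linf hfin]⟩
    fun _ hb => ⟨hb.1, hb.2.trans (ENNReal.ofReal_le_ofReal htt')⟩

end Schwarz

lemma IsPhiq.le_neg_div {q : ℝ} {φ : Sp → ℝ} (hφ : IsPhiq q φ) (x : Sp) :
    φ x ≤ -(mPhi φ / (1 + ‖x‖)) := by
  have hm : mPhi φ ≤ (1 + ‖x‖) * -φ x := by
    rw [← abs_of_nonpos (hφ.nonpos x)]
    exact ciInf_le ⟨0, by rintro _ ⟨y, rfl⟩; positivity⟩ x
  rw [le_neg, div_le_iff₀ (by positivity)]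
  linarith

lemma IsPhiq.lt_zero {q : ℝ} {φ : Sp → ℝ} (hφ : IsPhiq q φ) (x : Sp) : φ x < 0 :=
  (hφ.le_neg_div x).trans_lt (neg_lt_zero.mpr (div_pos hφ.m_pos (by positivity)))

lemma essInfE_lt_zero {φ : Sp → ℝ} (hφ : ∀ x, φ x < 0) : essInfE φ < 0 := by
  by_contra! h
  obtain ⟨x, hx⟩ := (ae_essInf_le (μ := volume) (f := fun x => (φ x : EReal))).exists
  exact (hφ x).not_ge (EReal.coe_nonneg.mp (h.trans hx))

lemma one_add_pow_three_le {δ t q : ℝ} (hδ : 0 < δ) (hδt : δ ≤ t) (hq : 3 ≤ q) :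
    (1 + t) ^ 3 ≤ (1 + δ⁻¹) ^ 3 * δ ^ (3 - q) * t ^ q := by
  have ht : 0 < t := hδ.trans_le hδt
  have hlin : 1 + t ≤ (1 + δ⁻¹) * t := by
    have : 1 ≤ δ⁻¹ * t := by rwa [inv_mul_eq_div, one_le_div hδ]
    linarith
  have hpow : t ^ (3 - q) ≤ δ ^ (3 - q) := Real.rpow_le_rpow_of_nonpos hδ hδt (by linarith)
  calc (1 + t) ^ 3 ≤ ((1 + δ⁻¹) * t) ^ 3 := by gcongr
  _ = (1 + δ⁻¹) ^ 3 * (t ^ (3 - q) * t ^ q) := by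
        rw [← Real.rpow_add ht, sub_add_cancel, mul_pow]; norm_cast
  _ ≤ (1 + δ⁻¹) ^ 3 * (δ ^ (3 - q) * t ^ q) := by gcongr
  _ = _ := by ring

section Jacobian

variable {φ : Sp → ℝ} {q e e' m : ℝ}

lemma aJacE_mono (φ : Sp → ℝ) : Monotone (aJacE φ) :=
  fun _ _ h => measure_mono fun _ hz => lt_of_lt_of_le hz h

lemma aJacE_congr_ae {ψ : Sp → ℝ} (h : φ =ᵐ[volume] ψ) : aJacE φ = aJacE ψ := by
  have hfst : ∀ᵐ z : Ph ∂volume, φ z.1 = ψ z.1 := by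
    rw [Measure.volume_eq_prod]
    exact Measure.QuasiMeasurePreserving.ae_eq Measure.quasiMeasurePreserving_fst h
  funext e
  refine measure_congr (hfst.mono fun z hz => ?_)
  change (microE φ z < e) = (microE ψ z < e)
  rw [microE, microE, hz]

/-- The velocity section of `{e_φ < -δ}` over `x` is empty unless `φ x < -δ`, and then it lies in
the ball of radius `1 + |φ x| ≤ (1 + δ⁻¹) |φ x|`. -/
lemma volume_microE_section_le {δ : ℝ} (hδ : 0 < δ) (hq : 3 ≤ q) (x : Sp) :
    volume {v : Sp | microE φ (x, v) < -δ} ≤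
      ENNReal.ofReal ((1 + δ⁻¹) ^ 3 * δ ^ (3 - q)) * ‖φ x‖ₑ ^ q *
        volume (Metric.ball (0 : Sp) 1) := by
  by_cases hx : φ x < -δ
  · have hφx : |φ x| = -φ x := abs_of_neg (by linarith)
    calc volume {v : Sp | microE φ (x, v) < -δ}
        ≤ volume (Metric.ball (0 : Sp) (1 + |φ x|)) := by
          refine measure_mono fun v hv => ?_
          rw [mem_ofPred_eq, microE] at hv
          rw [mem_ball_zero_iff, hφx]
          linarith [norm_le_vW v]
      _ = ENNReal.ofReal ((1 + |φ x|) ^ 3) * volume (Metric.ball (0 : Sp) 1) := by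
          rw [Measure.addHaar_ball _ _ (by positivity), finrank_euclideanSpace_fin]
      _ ≤ _ := by
          rw [Real.enorm_eq_ofReal_abs, ENNReal.ofReal_rpow_of_nonneg (abs_nonneg _) (by linarith),
            ← ENNReal.ofReal_mul (by positivity)]
          gcongr
          exact one_add_pow_three_le hδ (by linarith) hq
  · have hempty : {v : Sp | microE φ (x, v) < -δ} = ∅ := by
      ext v
      simp only [mem_ofPred_eq, microE, mem_empty_iff_false, iff_false, not_lt]
      linarith [one_le_vW v, not_lt.mp hx]
    simp [hempty]

lemma aJacE_lt_top (hq : 3 ≤ q) (hφ : MemLp φ (ENNReal.ofReal q) volume) (he : e < 0) :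
    aJacE φ e < ⊤ := by
  obtain ⟨δ, hδ, rfl⟩ : ∃ δ, 0 < δ ∧ e = -δ := ⟨-e, neg_pos.mpr he, (neg_neg e).symm⟩
  have hφm := hφ.aestronglyMeasurable.aemeasurable
  set ψ := hφm.mk φ
  rw [aJacE_congr_ae hφm.ae_eq_mk]
  have hint : ∫⁻ x, ‖ψ x‖ₑ ^ q < ⊤ := by
    have h := lintegral_rpow_enorm_lt_top_of_eLpNorm_lt_top
      (ENNReal.ofReal_ne_zero_iff.mpr (by linarith)) ENNReal.ofReal_ne_top
      (hφ.ae_eq hφm.ae_eq_mk).eLpNorm_lt_top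
    rwa [ENNReal.toReal_ofReal (by linarith)] at h
  calc aJacE ψ (-δ) = ∫⁻ x, volume {v : Sp | microE ψ (x, v) < -δ} := by
        rw [aJacE, Measure.volume_eq_prod, Measure.prod_apply
          (measurableSet_lt (measurable_microE hφm.measurable_mk) measurable_const)]
        rfl
  _ ≤ ∫⁻ x, ENNReal.ofReal ((1 + δ⁻¹) ^ 3 * δ ^ (3 - q)) * ‖ψ x‖ₑ ^ q *
        volume (Metric.ball (0 : Sp) 1) := lintegral_mono (volume_microE_section_le hδ hq)
  _ = ENNReal.ofReal ((1 + δ⁻¹) ^ 3 * δ ^ (3 - q)) * (∫⁻ x, ‖ψ x‖ₑ ^ q) *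
        volume (Metric.ball (0 : Sp) 1) := by
        rw [lintegral_mul_const' _ _ measure_ball_lt_top.ne,
          lintegral_const_mul' _ _ ENNReal.ofReal_ne_top]
  _ < ⊤ := ENNReal.mul_lt_top (ENNReal.mul_lt_top ENNReal.ofReal_lt_top hint) measure_ball_lt_top

lemma ofReal_aJac (hq : 3 ≤ q) (hφ : MemLp φ (ENNReal.ofReal q) volume) (he : e < 0) :
    ENNReal.ofReal (aJac φ e) = aJacE φ e :=
  ENNReal.ofReal_toReal (aJacE_lt_top hq hφ he).ne

lemma aJac_le_aJac (hq : 3 ≤ q) (hφ : MemLp φ (ENNReal.ofReal q) volume) (he' : e' < 0)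
    (h : e ≤ e') : aJac φ e ≤ aJac φ e' :=
  ENNReal.toReal_mono (aJacE_lt_top hq hφ he').ne (aJacE_mono φ h)

/-- `a_φ(e) → 0` as `e ↓ inf φ`: the limit set `{e_φ ≤ inf φ}` is null, since there `v = 0` or
`φ x < inf φ`. -/
lemma exists_aJacE_lt (hq : 3 ≤ q) (hφ : MemLp φ (ENNReal.ofReal q) volume)
    (hneg : ∀ x, φ x < 0) {δ : ℝ≥0∞} (hδ : 0 < δ) :
    ∃ e : ℝ, essInfE φ < e ∧ e < 0 ∧ aJacE φ e < δ := by
  set L := essInfE φ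
  set S : EReal → Set Ph := fun r => {z | (microE φ z : EReal) < r}
  have hS : ∀ e : ℝ, S e = {z | microE φ z < e} := fun e => by simp [S]
  obtain ⟨e₁, hLe₁, he₁⟩ := EReal.lt_iff_exists_real_btwn.mp (essInfE_lt_zero hneg)
  have he₁ : e₁ < 0 := EReal.coe_lt_coe_iff.mp he₁
  have hnull : volume (⋂ r > L, S r) = 0 := by
    refine measure_mono_null (t := {x | (φ x : EReal) < L} ×ˢ univ ∪ univ ×ˢ {0}) ?_ ?_
    · rintro ⟨x, v⟩ hz
      by_cases hv : v = 0
      · exact Or.inr ⟨mem_univ x, hv⟩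
      refine Or.inl ⟨?_, mem_univ v⟩
      have hle : (microE φ (x, v) : EReal) ≤ L := le_of_forall_gt fun r hr => mem_iInter₂.mp hz r hr
      have hlt : φ x < microE φ (x, v) := by rw [microE]; linarith [one_lt_vW hv]
      exact (EReal.coe_lt_coe_iff.mpr hlt).trans_le hle
    · rw [Measure.volume_eq_prod]
      refine measure_union_null ?_ ?_
      · rw [Measure.prod_prod, measure_eq_zero_iff_ae_notMem.mpr, zero_mul]
        filter_upwards [ae_essInf_le (μ := volume) (f := fun x => (φ x : EReal))] with x hx
        exact not_lt.mpr hx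
      · simp [Measure.prod_prod]
  have hlim := tendsto_measure_biInter_gt (μ := volume) (s := S) (a := L)
    (fun r _ => nullMeasurableSet_lt (aemeasurable_microE
      hφ.aestronglyMeasurable.aemeasurable).coe_real_ereal aemeasurable_const)
    (fun i j _ hij z hz => lt_of_lt_of_le hz hij)
    ⟨e₁, hLe₁, by rw [hS]; exact (aJacE_lt_top hq hφ he₁).ne⟩
  rw [hnull] at hlim
  have : (𝓝[>] L).NeBot := nhdsGT_neBot_of_exists_gt ⟨e₁, hLe₁⟩
  obtain ⟨r, hr, hLr, hre₁⟩ :=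
    ((hlim.eventually (gt_mem_nhds hδ)).and (Ioo_mem_nhdsGT hLe₁)).exists
  obtain ⟨e, rfl⟩ : ∃ e : ℝ, r = e :=
    ⟨r.toReal, (EReal.coe_toReal (hre₁.trans (EReal.coe_lt_top e₁)).ne hLr.ne_bot).symm⟩
  exact ⟨e, hLr, EReal.coe_lt_coe_iff.mp (hre₁.trans (EReal.coe_lt_coe_iff.mpr he₁)), by
    simpa [hS, aJacE] using hr⟩

lemma ball_prod_ball_subset_microE_lt (hφ : ∀ x, φ x ≤ -(m / (1 + ‖x‖)))
    {t : ℝ} (ht : 0 < t) :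
    Metric.ball (0 : Sp) (m / t ^ 2 - 1) ×ˢ Metric.ball (0 : Sp) t ⊆
      {z : Ph | microE φ z < -(t ^ 2 / 2)} := by
  rintro ⟨x, v⟩ ⟨hx, hv⟩
  rw [mem_ball_zero_iff] at hx hv
  have hpot : t ^ 2 < m / (1 + ‖x‖) := by
    rw [lt_div_iff₀ (by positivity), ← lt_div_iff₀' (by positivity)]
    linarith
  have hkin : ‖v‖ ^ 2 < t ^ 2 := by gcongr
  rw [mem_ofPred_eq, microE]
  linarith [vW_le_one_add_sq_div_two v, hφ x]

/-- The decay `φ x ≤ -m/(1+|x|)` makes `{e_φ < -t²/2}` contain `B(0, m/t² - 1) × B(0, t)`, whose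
volume grows like `t⁻³` as `t → 0`. -/
lemma exists_le_aJacE (hm : 0 < m) (hφ : ∀ x, φ x ≤ -(m / (1 + ‖x‖))) (T : ℝ) :
    ∃ e < 0, ENNReal.ofReal T ≤ aJacE φ e := by
  set V := volume (Metric.ball (0 : Sp) 1)
  have hV : 0 < V.toReal := ENNReal.toReal_pos (Metric.measure_ball_pos _ _ one_pos).ne'
    measure_ball_lt_top.ne
  set t := min (min 1 (m / 2)) (m ^ 3 * V.toReal ^ 2 / (8 * max T 1))
  have ht : 0 < t := by positivity
  have ht1 : t ≤ 1 := (min_le_left _ _).trans (min_le_left _ _)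
  have htm : t ≤ m / 2 := (min_le_left _ _).trans (min_le_right _ _)
  have htT : t ≤ m ^ 3 * V.toReal ^ 2 / (8 * max T 1) := min_le_right _ _
  set R := m / t ^ 2 - 1
  have hR : m / (2 * t ^ 2) ≤ R := by
    have : 1 ≤ m / (2 * t ^ 2) := by rw [le_div_iff₀ (by positivity)]; nlinarith
    have : m / t ^ 2 = 2 * (m / (2 * t ^ 2)) := by field_simp
    linarith
  have hR0 : 0 ≤ R := (div_pos hm (by positivity)).le.trans hR
  refine ⟨-(t ^ 2 / 2), by nlinarith, ?_⟩
  calc ENNReal.ofReal T ≤ ENNReal.ofReal (R ^ 3 * V.toReal * (t ^ 3 * V.toReal)) := by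
        refine ENNReal.ofReal_le_ofReal ?_
        calc T ≤ max T 1 := le_max_left _ _
        _ ≤ m ^ 3 * V.toReal ^ 2 / (8 * t) := by
            rw [le_div_iff₀ (by positivity)]
            linarith [(le_div_iff₀ (by positivity)).mp htT]
        _ ≤ m ^ 3 * V.toReal ^ 2 / (8 * t ^ 3) := by
            gcongr m ^ 3 * V.toReal ^ 2 / (8 * ?_)
            exact pow_le_of_le_one ht.le ht1 (by norm_num)
        _ = (m / (2 * t ^ 2)) ^ 3 * V.toReal * (t ^ 3 * V.toReal) := by field_simp; ring
        _ ≤ R ^ 3 * V.toReal * (t ^ 3 * V.toReal) := by gcongr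
  _ = volume (Metric.ball (0 : Sp) R ×ˢ Metric.ball (0 : Sp) t) := by
        rw [Measure.volume_eq_prod, Measure.prod_prod, Measure.addHaar_ball _ _ hR0,
          Measure.addHaar_ball _ _ ht.le, finrank_euclideanSpace_fin,
          ENNReal.ofReal_mul (mul_nonneg (pow_nonneg hR0 3) hV.le),
          ENNReal.ofReal_mul (pow_nonneg hR0 3), ENNReal.ofReal_mul (by positivity),
          ENNReal.ofReal_toReal measure_ball_lt_top.ne]
  _ ≤ aJacE φ (-(t ^ 2 / 2)) := measure_mono (ball_prod_ball_subset_microE_lt hφ ht)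

end Jacobian

def pseudoInvSet (f : Ph → ℝ) (φ : Sp → ℝ) (s : ℝ) : Set ℝ :=
  {e : ℝ | essInfE φ < e ∧ e < 0 ∧ s < schwarz f (aJac φ e)}

section PseudoInverse

variable {f : Ph → ℝ} {φ : Sp → ℝ} {q s b : ℝ}

lemma bddAbove_pseudoInvSet : BddAbove (pseudoInvSet f φ s) := ⟨0, fun _ he => he.2.1.le⟩

lemma pseudoInvSet_anti : Antitone (pseudoInvSet f φ) :=
  fun _ _ h _ he => ⟨he.1, he.2.1, h.trans_lt he.2.2⟩

lemma le_pseudoInv {e : ℝ} (he : e ∈ pseudoInvSet f φ s) : e ≤ pseudoInv f φ s :=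
  le_csSup bddAbove_pseudoInvSet he

lemma pseudoInv_le (hne : (pseudoInvSet f φ s).Nonempty) (h : ∀ e ∈ pseudoInvSet f φ s, e ≤ b) :
    pseudoInv f φ s ≤ b :=
  csSup_le hne h

/-- Take `s < s' < ‖f‖_∞`: near `inf φ`, `a_φ(e) < μ_f(s')`, hence `f*(a_φ(e)) ≥ s' > s`. -/
lemma pseudoInvSet_nonempty (hnn : ∀ z, 0 ≤ f z) (hq : 3 ≤ q) (hφ : IsPhiq q φ) (hs : 0 ≤ s)
    (hsL : s < Linf f) : (pseudoInvSet f φ s).Nonempty := by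
  obtain ⟨s', hss', hs'L⟩ := exists_between hsL
  obtain ⟨e, hLe, he, hsmall⟩ :=
    exists_aJacE_lt hq hφ.lq hφ.lt_zero (distFun_pos hnn (hs.trans hss'.le) hs'L)
  refine ⟨e, hLe, he, hss'.trans_le (le_schwarz ?_ ?_)⟩
  · exact eLpNorm_top_ne_top_of_Linf_pos (hs.trans_lt hsL)
  · rwa [ofReal_aJac hq hφ.lq he]

lemma pseudoInv_anti {s₁ s₂ : ℝ} (h : s₁ ≤ s₂) (hne : (pseudoInvSet f φ s₂).Nonempty) :
    pseudoInv f φ s₂ ≤ pseudoInv f φ s₁ :=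
  csSup_le_csSup bddAbove_pseudoInvSet hne (pseudoInvSet_anti h)

lemma essInfE_lt_pseudoInv (hne : (pseudoInvSet f φ s).Nonempty) :
    essInfE φ < (pseudoInv f φ s : EReal) :=
  let ⟨_, he⟩ := hne
  he.1.trans_le (EReal.coe_le_coe_iff.mpr (le_pseudoInv he))

lemma pseudoInv_lt_zero (hf : Integrable f volume) (hq : 3 ≤ q) (hφ : IsPhiq q φ) (hs : 0 < s)
    (hne : (pseudoInvSet f φ s).Nonempty) : pseudoInv f φ s < 0 := by
  obtain ⟨e₀, he₀, hbig⟩ := exists_le_aJacE hφ.m_pos hφ.le_neg_div (distFun f s).toReal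
  have hμ : distFun f s ≠ ⊤ := (hf.measure_gt_lt_top hs).ne
  rw [ENNReal.ofReal_toReal hμ] at hbig
  refine (pseudoInv_le hne fun e ⟨_, he, hse⟩ => ?_).trans_lt he₀
  by_contra! h
  refine hse.not_ge (schwarz_le hs.le ?_)
  rw [ofReal_aJac hq hφ.lq he]
  exact hbig.trans (aJacE_mono φ h.le)

lemma microE_le_pseudoInv {z : Ph} (hs : 0 ≤ s) (hz : s < rearr f φ z)
    (hne : (pseudoInvSet f φ s).Nonempty) : microE φ z ≤ pseudoInv f φ s := by
  have hE : microE φ z < 0 := by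
    by_contra! h
    rw [rearr, if_neg h.not_gt] at hz
    exact hz.not_ge hs
  rw [rearr, if_pos hE] at hz
  by_cases hL : essInfE φ < microE φ z
  · exact le_pseudoInv ⟨hL, hE, hz⟩
  · obtain ⟨e, he⟩ := hne
    exact (EReal.coe_lt_coe_iff.mp ((not_lt.mp hL).trans_lt he.1)).le.trans (le_pseudoInv he)

lemma pseudoInv_le_microE {z : Ph} (hfin : eLpNorm f ⊤ volume ≠ ⊤) (hq : 3 ≤ q)
    (hφ : MemLp φ (ENNReal.ofReal q) volume) (hz : rearr f φ z ≤ s)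
    (hne : (pseudoInvSet f φ s).Nonempty) : pseudoInv f φ s ≤ microE φ z := by
  refine pseudoInv_le hne fun e ⟨_, he, hse⟩ => ?_
  by_contra! h
  rw [rearr, if_pos (h.trans he)] at hz
  exact hz.not_gt (hse.trans_le (schwarz_anti hfin (aJac_le_aJac hq hφ he h.le)))

end PseudoInverse

theorem stmt13_general (p : ℝ) (f : Ph → ℝ) (hf : IsEp p f)
    (q : ℝ) (hq : 3 < q) (φ : Sp → ℝ) (hφ : IsPhiq q φ) :
    (∀ s₁ s₂ : ℝ, 0 < s₁ → s₁ ≤ s₂ → s₂ < Linf f →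
      pseudoInv f φ s₂ ≤ pseudoInv f φ s₁) ∧
    (∀ s : ℝ, 0 < s → s < Linf f →
      essInfE φ < (pseudoInv f φ s : EReal) ∧ pseudoInv f φ s < 0) ∧
    ∀ z : Ph, ∀ s : ℝ, 0 < s → s < Linf f →
      (s < rearr f φ z → microE φ z ≤ pseudoInv f φ s) ∧
      (rearr f φ z ≤ s → pseudoInv f φ s ≤ microE φ z) := by
  have hne : ∀ s, 0 < s → s < Linf f → (pseudoInvSet f φ s).Nonempty :=
    fun s hs hsL => pseudoInvSet_nonempty hf.nonneg hq.le hφ hs.le hsL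
  refine ⟨fun s₁ s₂ hs₁ h hs₂ => ?_, fun s hs hsL => ⟨?_, ?_⟩,
    fun z s hs hsL => ⟨fun hz => ?_, fun hz => ?_⟩⟩
  · exact pseudoInv_anti h (hne s₂ (hs₁.trans_le h) hs₂)
  · exact essInfE_lt_pseudoInv (hne s hs hsL)
  · exact pseudoInv_lt_zero hf.l1 hq.le hφ hs (hne s hs hsL)
  · exact microE_le_pseudoInv hs.le hz (hne s hs hsL)
  · exact pseudoInv_le_microE (eLpNorm_top_ne_top_of_Linf_pos (hs.trans hsL)) hq.le hφ.lq hz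
      (hne s hs hsL)

/-- properties of the pseudo-inverse of f* ∘ a_φ. -/
theorem stmt13 (p : ℝ) (hp : 3 / 2 < p) (f : Ph → ℝ) (hf : IsEp p f) (hne : f ≠ 0)
    (q : ℝ) (hq : 3 < q) (φ : Sp → ℝ) (hφ : IsPhiq q φ) :
    (∀ s₁ s₂ : ℝ, 0 < s₁ → s₁ ≤ s₂ → s₂ < Linf f →
      pseudoInv f φ s₂ ≤ pseudoInv f φ s₁) ∧
    (∀ s : ℝ, 0 < s → s < Linf f →
      essInfE φ < (pseudoInv f φ s : EReal) ∧ pseudoInv f φ s < 0) ∧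
    ∀ z : Ph, ∀ s : ℝ, 0 < s → s < Linf f →
      (s < rearr f φ z → microE φ z ≤ pseudoInv f φ s) ∧
      (rearr f φ z ≤ s → pseudoInv f φ s ≤ microE φ z) :=
  stmt13_general p f hf q hq φ hφ
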